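/- arXiv:2301.04808 — 2 statements merged into one kernel-verified Lean document; each statement's English description precedes it below -/
import Mathlib

section
/- Let G be a simple graph on n vertices with average degree d_av = (Σ_{v∈V} deg v)/n, and let r, k be integers with 1 ≤ k ≤ r. Then Σ_{v∈V^r} #N_{G(r,k)}[v] = n^r · Σ_{j=0}^{k} C(r,j)·d_av^j, where N_{G(r,k)}[v] is the closed neighbourhood of v in G(r,k); equivalently, the expected closed-neighbourhood size of a uniformly random vertex of G(r,k) equals Σ_{j=0}^{k} C(r,j)·d_av^j. -/
/-- The binary entropy function `H(x) = -x log₂ x - (1-x) log₂ (1-x)`. -/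
noncomputable def binH (x : ℝ) : ℝ := -x * Real.logb 2 x - (1 - x) * Real.logb 2 (1 - x)

/-- The graph `G(r,k)`: vertices are `r`-tuples of vertices of `G`, and two distinct
tuples are adjacent iff they are adjacent in the `r`-th strong power of `G` (in every
coordinate they are equal or adjacent) and they differ in at most `k` coordinates.
For `k = r` this is exactly the `r`-th strong power `G(r)`. -/
def strongPow {V : Type*} [DecidableEq V] (G : SimpleGraph V) (r k : ℕ) :
    SimpleGraph (Fin r → V) where
  Adj u v := u ≠ v ∧ (∀ i, u i = v i ∨ G.Adj (u i) (v i)) ∧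
    (Finset.univ.filter fun i => u i ≠ v i).card ≤ k
  symm := ⟨by
    rintro u v ⟨h1, h2, h3⟩
    refine ⟨fun h => h1 h.symm, fun i => (h2 i).imp Eq.symm (fun h => G.symm.symm _ _ h), ?_⟩
    have he : (Finset.univ.filter fun i => v i ≠ u i)
        = (Finset.univ.filter fun i => u i ≠ v i) := by
      ext i; simp [ne_comm]
    rw [he]; exact h3⟩
  loopless := ⟨fun u h => h.1 rfl⟩

/-- The independence number `α(H)` of a graph `H` on a finite vertex set: the maximum
size of a stable (independent) set of vertices. -/
noncomputable def indepNum {α : Type*} [Fintype α] (H : SimpleGraph α) : ℕ :=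
  sSup {k | ∃ s : Finset α, (s : Set α).Pairwise (fun a b => ¬H.Adj a b) ∧ s.card = k}

/-- The `γ`-fractional capacity `Θ_γ(G) = sup_{r ≥ 1/γ} α(G(r, ⌊γr⌋))^{1/r}`.
For `γ = 1` this is the (full) Shannon capacity `Θ(G)`. -/
noncomputable def fracCap {V : Type*} [Fintype V] [DecidableEq V]
    (γ : ℝ) (G : SimpleGraph V) : ℝ :=
  sSup {x : ℝ | ∃ r : ℕ, 1 ≤ γ * r ∧
    x = (indepNum (strongPow G r ⌊γ * r⌋₊) : ℝ) ^ ((r : ℝ)⁻¹)}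

/-!
A vertex `u` of the closed neighbourhood of `v` in `G(r,k)` is determined by the set `S` of
coordinates where it differs from `v` (at most `k` of them) together with a neighbour of `v i`
for each `i ∈ S`, so that neighbourhood has `∑_{|S| ≤ k} ∏_{i ∈ S} deg (v i)` elements.
Summing over `v` factorises coordinatewise: each `S` contributes `D^|S| n^(r-|S|)` with
`D = ∑ deg = n d_av`, and there are `C(r,j)` sets of size `j`.
-/

open Finset

theorem Fintype.sum_pi_prod_apply {ι V R : Type*} [Fintype ι] [DecidableEq ι] [Fintype V]
    [CommSemiring R] (f : V → R) (S : Finset ι) :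
    ∑ v : ι → V, ∏ i ∈ S, f (v i)
      = (∑ w, f w) ^ #S * (Fintype.card V : R) ^ (Fintype.card ι - #S) := by
  calc ∑ v : ι → V, ∏ i ∈ S, f (v i)
      = ∑ v : ι → V, ∏ i, if i ∈ S then f (v i) else 1 :=
        Finset.sum_congr rfl fun v _ => (prod_ite_mem_eq S _).symm
    _ = ∏ i, ∑ w, if i ∈ S then f w else 1 :=
        (Fintype.prod_sum fun i w => if i ∈ S then f w else 1).symm
    _ = ∏ i, if i ∈ S then ∑ w, f w else (Fintype.card V : R) := by
      congr! 1 with i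
      split_ifs <;> simp
    _ = (∑ w, f w) ^ #S * (Fintype.card V : R) ^ (Fintype.card ι - #S) := by
      rw [prod_ite, prod_const, prod_const, filter_mem_eq_inter, univ_inter, filter_not,
        filter_mem_eq_inter, univ_inter, card_univ_sdiff]

theorem sum_filter_card_le_eq_sum_choose {ι M : Type*} [Fintype ι] [AddCommMonoid M]
    (f : ℕ → M) (k : ℕ) :
    ∑ S : Finset ι with #S ≤ k, f #S = ∑ j ∈ range (k + 1), (Fintype.card ι).choose j • f j := by
  rw [← sum_fiberwise_of_maps_to (g := card) (t := range (k + 1))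
    (fun S hS => by simpa [Nat.lt_succ_iff] using hS)]
  refine sum_congr rfl fun j hj => ?_
  have hfiber : ({S : Finset ι | #S ≤ k} : Finset _).filter (#· = j) = powersetCard j univ := by
    ext S
    simp only [mem_filter, mem_univ, true_and, mem_powersetCard, subset_univ]
    grind
  rw [hfiber, sum_congr rfl fun S hS => congrArg f (mem_powersetCard.mp hS).2, sum_const,
    card_powersetCard, card_univ]

section

variable {ι V : Type*} [Fintype ι] [DecidableEq ι] [Fintype V] [DecidableEq V]
  (G : SimpleGraph V) [DecidableRel G.Adj]

theorem mem_piFinset_neighborFinset_iff {v u : ι → V} {S : Finset ι} :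
    u ∈ Fintype.piFinset (fun i => if i ∈ S then G.neighborFinset (v i) else {v i}) ↔
      ({i | v i ≠ u i} : Finset ι) = S ∧ ∀ i ∈ S, G.Adj (v i) (u i) := by
  simp only [Fintype.mem_piFinset, Finset.ext_iff, mem_filter, mem_univ, true_and,
    ← forall_and]
  refine forall_congr' fun i => ?_
  by_cases hi : i ∈ S
  · simpa [hi] using fun h => h.ne
  · simp [hi, eq_comm]

omit [DecidableEq V] in
theorem card_piFinset_neighborFinset (v : ι → V) (S : Finset ι) :
    #(Fintype.piFinset (fun i => if i ∈ S then G.neighborFinset (v i) else {v i}))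
      = ∏ i ∈ S, G.degree (v i) := by
  simp [Fintype.card_piFinset, apply_ite Finset.card]

theorem ncard_closedBall_eq_sum_prod_degree (k : ℕ) (v : ι → V) :
    {u : ι → V | (∀ i, v i ≠ u i → G.Adj (v i) (u i)) ∧ #{i | v i ≠ u i} ≤ k}.ncard
      = ∑ S with #S ≤ k, ∏ i ∈ S, G.degree (v i) := by
  rw [Set.ncard_eq_toFinset_card', Set.toFinset_ofPred,
    card_eq_sum_card_fiberwise (f := fun u : ι → V => ({i | v i ≠ u i} : Finset ι))
      (t := {S | #S ≤ k}) (fun u hu => by simp_all)]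
  refine sum_congr rfl fun S hS => ?_
  rw [← card_piFinset_neighborFinset]
  congr 1
  ext u
  rw [mem_piFinset_neighborFinset_iff]
  simp only [mem_filter, mem_univ, true_and] at hS ⊢
  constructor
  · rintro ⟨⟨hadj, -⟩, rfl⟩
    exact ⟨rfl, fun i hi => hadj i (by simpa using hi)⟩
  · rintro ⟨rfl, hadj⟩
    exact ⟨⟨fun i hi => hadj i (by simpa using hi), hS⟩, rfl⟩

end

theorem insert_neighborSet_strongPow {V : Type*} [DecidableEq V] (G : SimpleGraph V)
    (r k : ℕ) (v : Fin r → V) :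
    insert v ((strongPow G r k).neighborSet v)
      = {u | (∀ i, v i ≠ u i → G.Adj (v i) (u i)) ∧ #{i | v i ≠ u i} ≤ k} := by
  ext u
  by_cases huv : v = u
  · subst huv
    simp
  · simp [strongPow, huv, Ne.symm huv, or_iff_not_imp_left]

theorem sum_ncard_insert_neighborSet_strongPow {V : Type*} [Fintype V] [DecidableEq V]
    (G : SimpleGraph V) [DecidableRel G.Adj] (r k : ℕ) :
    ∑ v : Fin r → V, (insert v ((strongPow G r k).neighborSet v)).ncard
      = ∑ j ∈ range (k + 1), r.choose j * ((∑ w, G.degree w) ^ j * Fintype.card V ^ (r - j)) := by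
  let D := ∑ w, G.degree w
  calc ∑ v : Fin r → V, (insert v ((strongPow G r k).neighborSet v)).ncard
      = ∑ v : Fin r → V, ∑ S : Finset (Fin r) with #S ≤ k, ∏ i ∈ S, G.degree (v i) := by
        refine sum_congr rfl fun v _ => ?_
        rw [insert_neighborSet_strongPow, ncard_closedBall_eq_sum_prod_degree]
    _ = ∑ S : Finset (Fin r) with #S ≤ k, D ^ #S * Fintype.card V ^ (r - #S) := by
        rw [sum_comm]
        refine sum_congr rfl fun S _ => ?_
        rw [Fintype.sum_pi_prod_apply (fun w => G.degree w) S, Nat.cast_id, Fintype.card_fin]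
    _ = ∑ j ∈ range (k + 1), r.choose j * (D ^ j * Fintype.card V ^ (r - j)) := by
        rw [sum_filter_card_le_eq_sum_choose (fun j => D ^ j * Fintype.card V ^ (r - j)),
          Fintype.card_fin]
        simp only [smul_eq_mul]

theorem pow_mul_div_pow {K : Type*} [Field K] {n D : K} (hD : n = 0 → D = 0) {r j : ℕ}
    (hj : j ≤ r) : n ^ r * (D / n) ^ j = D ^ j * n ^ (r - j) := by
  rcases eq_or_ne n 0 with rfl | hn
  · rcases Nat.eq_zero_or_pos j with rfl | hj0
    · simp
    · simp [hD rfl, zero_pow hj0.ne']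
  · rw [div_pow, ← pow_sub_mul_pow n hj]
    field_simp

theorem sum_closedNeighborhood_card_general {V : Type*} [Fintype V] [DecidableEq V]
    (G : SimpleGraph V) [DecidableRel G.Adj] (r k : ℕ) :
    ∑ v : Fin r → V, ((insert v ((strongPow G r k).neighborSet v)).ncard : ℝ)
      = (Fintype.card V : ℝ) ^ r *
          ∑ j ∈ Finset.range (k + 1), (r.choose j : ℝ) *
            ((∑ w : V, (G.degree w : ℝ)) / (Fintype.card V : ℝ)) ^ j := by
  have hD : (Fintype.card V : ℝ) = 0 → ∑ w : V, (G.degree w : ℝ) = 0 := fun hn => by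
    have : IsEmpty V := Fintype.card_eq_zero_iff.mp (mod_cast hn)
    simp
  rw [← Nat.cast_sum, sum_ncard_insert_neighborSet_strongPow, mul_sum]
  push_cast
  refine sum_congr rfl fun j _ => ?_
  rcases le_or_gt j r with hj | hj
  · linear_combination -(r.choose j : ℝ) * pow_mul_div_pow hD hj
  · simp [Nat.choose_eq_zero_of_lt hj]

/-- Average ball-size identity: summing the closed-neighbourhood sizes in `G(r,k)` over
all vertices of `V^r` gives `n^r Σ_{j=0}^{k} C(r,j) d_av^j`; equivalently, the expected
closed-neighbourhood size of a uniformly random vertex is `Σ_{j=0}^{k} C(r,j) d_av^j`. -/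
theorem sum_closedNeighborhood_card {V : Type*} [Fintype V] [DecidableEq V]
    (G : SimpleGraph V) [DecidableRel G.Adj] (r k : ℕ) (hk1 : 1 ≤ k) (hkr : k ≤ r) :
    ∑ v : Fin r → V, ((insert v ((strongPow G r k).neighborSet v)).ncard : ℝ)
      = (Fintype.card V : ℝ) ^ r *
          ∑ j ∈ Finset.range (k + 1), (r.choose j : ℝ) *
            ((∑ w : V, (G.degree w : ℝ)) / (Fintype.card V : ℝ)) ^ j :=
  sum_closedNeighborhood_card_general G r k
end

section
/- Let G be a connected simple graph on n ≥ 3 vertices. If 0 < γ < (n−1)/n, then Θ_γ(G) ≥ n / (2^{H(γ)}·(n−1)^γ); and if (n−1)/n ≤ γ ≤ 1, then Θ_γ(G) ≥ 1. -/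
/-!
A code in `V^r` whose words pairwise differ in more than `k` coordinates is independent in
`G(r,k)`, whatever `G` is. A maximal such code has Hamming balls of radius `k` covering `V^r`
(Gilbert–Varshamov), so `α(G(r,k)) ≥ n^r / ∑_{i ≤ k} C(r,i) (n-1)^i`. With `k = ⌊γr⌋` and
`γ ≤ (n-1)/n`, the Chernoff bound estimates this ball volume by `(2^{H(γ)} (n-1)^γ)^r` for
every `r`, so any single admissible `r` already gives the bound on `Θ_γ(G)`.
-/

open Finset Fintype

section HammingCode

variable {ι β : Type*} [Fintype ι] [DecidableEq ι] [Fintype β] [DecidableEq β]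

theorem card_hammingBall_le (c : ι → β) (k : ℕ) :
    #{u | hammingDist u c ≤ k} ≤ ∑ i ∈ range (k + 1), (card ι).choose i * (card β - 1) ^ i := by
  let box (s : Finset ι) : Finset (ι → β) :=
    piFinset fun i => if i ∈ s then univ.erase (c i) else {c i}
  have card_box (s : Finset ι) : #(box s) = (card β - 1) ^ #s := by
    simp only [box, card_piFinset, apply_ite card, card_erase_of_mem (mem_univ _), card_univ,
      card_singleton]
    rw [Fintype.prod_ite_mem, prod_const]
  have hcover : ({u | hammingDist u c ≤ k} : Finset (ι → β)) ⊆
      (range (k + 1)).biUnion fun i => (powersetCard i univ).biUnion box := by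
    intro u hu
    simp only [mem_filter, mem_univ, true_and] at hu
    simp only [mem_biUnion, mem_range, mem_powersetCard]
    refine ⟨_, Nat.lt_succ_of_le hu, ({i | u i ≠ c i} : Finset ι), ⟨subset_univ _, rfl⟩, ?_⟩
    simp only [box, mem_piFinset]
    intro i
    by_cases h : u i = c i <;> simp [h]
  calc #{u | hammingDist u c ≤ k}
      ≤ ∑ i ∈ range (k + 1), ∑ s ∈ powersetCard i univ, #(box s) :=
        (card_le_card hcover).trans <| card_biUnion_le.trans <| sum_le_sum fun _ _ ↦ card_biUnion_le
    _ = ∑ i ∈ range (k + 1), (card ι).choose i * (card β - 1) ^ i := by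
        refine Finset.sum_congr rfl fun i _ ↦ ?_
        rw [Finset.sum_congr rfl fun s hs ↦ by rw [card_box, (mem_powersetCard.1 hs).2], sum_const,
          card_powersetCard, card_univ, smul_eq_mul]

theorem exists_code_covering (k : ℕ) :
    ∃ C : Finset (ι → β), (C : Set (ι → β)).Pairwise (fun a b ↦ k < hammingDist a b) ∧
      ∀ v, ∃ c ∈ C, hammingDist v c ≤ k := by
  classical
  obtain ⟨C, hC, hmax⟩ := exists_max_image
    (univ.powerset.filter fun C : Finset (ι → β) ↦
      (C : Set (ι → β)).Pairwise (fun a b ↦ k < hammingDist a b)) card ⟨∅, by simp⟩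
  simp only [mem_filter, mem_powerset, subset_univ, true_and] at hC hmax
  refine ⟨C, hC, fun v ↦ ?_⟩
  by_contra! hfar
  have hv : v ∉ C := fun hv ↦ by simpa using hfar v hv
  have hins : ((insert v C : Finset _) : Set (ι → β)).Pairwise
      (fun a b ↦ k < hammingDist a b) := by
    rw [coe_insert]
    exact hC.insert_of_notMem hv fun b hb ↦ ⟨hfar b hb, hammingDist_comm b v ▸ hfar b hb⟩
  have := hmax _ hins
  rw [card_insert_of_notMem hv] at this
  omega

/-- Gilbert–Varshamov bound. -/
theorem exists_code_card_mul_ge (k : ℕ) :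
    ∃ C : Finset (ι → β), (C : Set (ι → β)).Pairwise (fun a b ↦ k < hammingDist a b) ∧
      card β ^ card ι ≤ #C * ∑ i ∈ range (k + 1), (card ι).choose i * (card β - 1) ^ i := by
  obtain ⟨C, hC, hcover⟩ := exists_code_covering (ι := ι) (β := β) k
  refine ⟨C, hC, ?_⟩
  calc card β ^ card ι = #(univ : Finset (ι → β)) := by simp
    _ ≤ #(C.biUnion fun c ↦ {u | hammingDist u c ≤ k}) := card_le_card fun v _ ↦ by
        obtain ⟨c, hc, hvc⟩ := hcover v
        exact mem_biUnion.2 ⟨c, hc, by simpa using hvc⟩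
    _ ≤ ∑ c ∈ C, #{u | hammingDist u c ≤ k} := card_biUnion_le
    _ ≤ _ := by
        rw [← smul_eq_mul, ← sum_const]
        exact sum_le_sum fun c _ ↦ card_hammingBall_le c k

end HammingCode

theorem two_rpow_binH {γ : ℝ} (hγ0 : 0 < γ) (hγ1 : γ < 1) :
    (2 : ℝ) ^ binH γ = γ ^ (-γ) * (1 - γ) ^ (-(1 - γ)) := by
  have hb : binH γ = Real.logb 2 γ * (-γ) + Real.logb 2 (1 - γ) * (-(1 - γ)) := by
    unfold binH; ring
  rw [hb, Real.rpow_add two_pos, Real.rpow_mul zero_le_two, Real.rpow_mul zero_le_two,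
    Real.rpow_logb two_pos (by norm_num) hγ0, Real.rpow_logb two_pos (by norm_num) (by linarith)]

/-- Chernoff: weight the `i`-th term by `x ^ (i - t) ≥ 1` and complete the binomial sum. -/
theorem sum_range_choose_mul_pow_le {a x t : ℝ} (ha : 0 ≤ a) (hx0 : 0 < x) (hx1 : x ≤ 1)
    {r k : ℕ} (hkr : k ≤ r) (hkt : k ≤ t) :
    ∑ i ∈ range (k + 1), (r.choose i : ℝ) * a ^ i ≤ (1 + a * x) ^ r / x ^ t := by
  rw [le_div_iff₀ (Real.rpow_pos_of_pos hx0 t), sum_mul]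
  calc ∑ i ∈ range (k + 1), (r.choose i : ℝ) * a ^ i * x ^ t
      ≤ ∑ i ∈ range (r + 1), (r.choose i : ℝ) * (a * x) ^ i := by
        refine (sum_le_sum fun i hi ↦ ?_).trans <|
          sum_le_sum_of_subset_of_nonneg (range_subset_range.2 (by omega)) fun _ _ _ ↦ by positivity
        have hit : (i : ℝ) ≤ t :=
          le_trans (by exact_mod_cast Nat.lt_succ_iff.1 (mem_range.1 hi)) hkt
        have : x ^ t ≤ x ^ i := by
          simpa using Real.rpow_le_rpow_of_exponent_ge hx0 hx1 hit
        rw [mul_pow, mul_assoc]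
        gcongr
    _ = (1 + a * x) ^ r := by
        rw [add_comm 1, add_pow]
        exact sum_congr rfl fun i _ ↦ by ring

theorem sum_range_choose_mul_pow_le_two_rpow_binH {m γ : ℝ} (hm : 0 < m) (hγ0 : 0 < γ)
    (hγm : γ ≤ m / (m + 1)) {r k : ℕ} (hkr : (k : ℝ) ≤ γ * r) :
    ∑ i ∈ range (k + 1), (r.choose i : ℝ) * m ^ i ≤ ((2 : ℝ) ^ binH γ * m ^ γ) ^ r := by
  have hγ1 : γ < 1 := hγm.trans_lt <| (div_lt_one (by linarith)).2 (by linarith)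
  have h1γ : 0 < 1 - γ := by linarith
  -- `x` minimises `(1 + m x) ^ r / x ^ (γ r)`
  set x := γ / ((1 - γ) * m) with hx
  have hx0 : 0 < x := by positivity
  have hx1 : x ≤ 1 := by
    rw [hx, div_le_one (by positivity)]
    rw [le_div_iff₀ (by linarith)] at hγm
    linarith
  have hkr' : k ≤ r := by
    exact_mod_cast hkr.trans (mul_le_of_le_one_left (Nat.cast_nonneg r) hγ1.le)
  refine (sum_range_choose_mul_pow_le hm.le hx0 hx1 hkr' hkr).trans_eq ?_
  have h1 : 1 + m * x = (1 - γ)⁻¹ := by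
    rw [hx]; field_simp; ring
  have h2 : x ^ γ * (2 ^ binH γ * m ^ γ) = (1 - γ)⁻¹ := by
    have hsplit : (1 - γ) ^ (-(1 - γ)) = (1 - γ) ^ γ * (1 - γ)⁻¹ := by
      rw [show -(1 - γ) = γ + -1 by ring, Real.rpow_add h1γ, Real.rpow_neg_one]
    rw [two_rpow_binH hγ0 hγ1, hsplit, hx, Real.div_rpow hγ0.le (by positivity),
      Real.mul_rpow h1γ.le hm.le, Real.rpow_neg hγ0.le]
    field_simp
  rw [h1, div_eq_iff (by positivity), Real.rpow_mul hx0.le, Real.rpow_natCast, ← mul_pow,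
    mul_comm, ← h2]

section IndepNum

variable {α : Type*} [Fintype α] (H : SimpleGraph α)

theorem card_le_indepNum {s : Finset α} (hs : (s : Set α).Pairwise fun a b ↦ ¬H.Adj a b) :
    #s ≤ indepNum H :=
  le_csSup ⟨card α, by rintro _ ⟨t, _, rfl⟩; exact card_le_univ t⟩ ⟨s, hs, rfl⟩

theorem indepNum_le_card : indepNum H ≤ card α :=
  csSup_le ⟨0, ∅, by simp, rfl⟩ (by rintro _ ⟨t, _, rfl⟩; exact card_le_univ t)

theorem one_le_indepNum [Nonempty α] : 1 ≤ indepNum H := by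
  simpa using card_le_indepNum H (s := {Classical.arbitrary α}) (by simp)

end IndepNum

section StrongPow

variable {V : Type*} [Fintype V] [DecidableEq V] (G : SimpleGraph V)

theorem card_le_indepNum_strongPow {r k : ℕ} {C : Finset (Fin r → V)}
    (hC : (C : Set (Fin r → V)).Pairwise fun a b ↦ k < hammingDist a b) :
    #C ≤ indepNum (strongPow G r k) :=
  card_le_indepNum _ <| hC.mono' fun _ _ hab ⟨_, _, hk⟩ ↦ hab.not_ge hk

theorem pow_le_indepNum_strongPow_mul (r k : ℕ) :
    card V ^ r ≤ indepNum (strongPow G r k) *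
      ∑ i ∈ range (k + 1), r.choose i * (card V - 1) ^ i := by
  obtain ⟨C, hC, hcard⟩ := exists_code_card_mul_ge (ι := Fin r) (β := V) k
  simp only [Fintype.card_fin] at hcard
  exact hcard.trans (Nat.mul_le_mul_right _ (card_le_indepNum_strongPow G hC))

theorem card_div_le_indepNum_strongPow_rpow_inv {γ : ℝ} (hγ0 : 0 < γ)
    (hγ : γ ≤ (card V - 1) / card V) {r : ℕ} (hr : 0 < r) :
    (card V : ℝ) / (2 ^ binH γ * (card V - 1) ^ γ) ≤
      (indepNum (strongPow G r ⌊γ * r⌋₊) : ℝ) ^ (r : ℝ)⁻¹ := by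
  have hV : (1 : ℝ) < card V := by
    by_contra! hV
    exact hγ0.not_ge <| hγ.trans <| div_nonpos_of_nonpos_of_nonneg (by linarith) (by positivity)
  set m : ℝ := card V - 1 with hm
  have hm0 : 0 < m := by linarith
  have hvol := sum_range_choose_mul_pow_le_two_rpow_binH hm0 hγ0 (by simpa [hm] using hγ)
    (Nat.floor_le (by positivity) : (⌊γ * r⌋₊ : ℝ) ≤ γ * r)
  have hgv : (card V : ℝ) ^ r ≤ indepNum (strongPow G r ⌊γ * r⌋₊) *
      ∑ i ∈ range (⌊γ * r⌋₊ + 1), (r.choose i : ℝ) * m ^ i := by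
    have := (Nat.cast_le (α := ℝ)).2 (pow_le_indepNum_strongPow_mul G r ⌊γ * r⌋₊)
    push_cast [Nat.cast_sub (show 1 ≤ card V by exact_mod_cast hV.le)] at this
    exact this
  rw [Real.le_rpow_inv_iff_of_pos (by positivity) (by positivity) (by positivity),
    Real.rpow_natCast, div_pow, div_le_iff₀ (by positivity)]
  exact hgv.trans (mul_le_mul_of_nonneg_left hvol (by positivity))

theorem indepNum_strongPow_rpow_inv_le_card {r : ℕ} (k : ℕ) (hr : 0 < r) :
    (indepNum (strongPow G r k) : ℝ) ^ (r : ℝ)⁻¹ ≤ card V := by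
  rw [Real.rpow_inv_le_iff_of_pos (by positivity) (by positivity) (by positivity),
    Real.rpow_natCast]
  exact_mod_cast (indepNum_le_card _).trans_eq (by simp)

theorem le_fracCap {γ : ℝ} {r : ℕ} (hr : 1 ≤ γ * r) :
    (indepNum (strongPow G r ⌊γ * r⌋₊) : ℝ) ^ (r : ℝ)⁻¹ ≤ fracCap γ G := by
  refine le_csSup ⟨card V, ?_⟩ ⟨r, hr, rfl⟩
  rintro _ ⟨s, hs, rfl⟩
  exact indepNum_strongPow_rpow_inv_le_card G _ <|
    Nat.pos_of_ne_zero <| by rintro rfl; norm_num at hs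

end StrongPow

theorem fracCap_lower_bound_n_general {V : Type*} [Fintype V] [DecidableEq V]
    (G : SimpleGraph V) (hn : 3 ≤ Fintype.card V)
    (γ : ℝ) (hγ0 : 0 < γ) :
    (γ < ((Fintype.card V : ℝ) - 1) / (Fintype.card V : ℝ) →
      (Fintype.card V : ℝ) / ((2 : ℝ) ^ binH γ * ((Fintype.card V : ℝ) - 1) ^ γ)
        ≤ fracCap γ G) ∧
    (((Fintype.card V : ℝ) - 1) / (Fintype.card V : ℝ) ≤ γ →
      1 ≤ fracCap γ G) := by
  obtain ⟨r, hr⟩ : ∃ r : ℕ, 1 ≤ γ * r :=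
    ⟨⌈γ⁻¹⌉₊, by simpa [hγ0.ne'] using mul_le_mul_of_nonneg_left (Nat.le_ceil γ⁻¹) hγ0.le⟩
  have hr0 : 0 < r := Nat.pos_of_ne_zero <| by rintro rfl; norm_num at hr
  have : Nonempty V := card_pos_iff.1 (by omega)
  refine ⟨fun hγ ↦ ?_, fun _ ↦ ?_⟩
  · exact (card_div_le_indepNum_strongPow_rpow_inv G hγ0 hγ.le hr0).trans (le_fracCap G hr)
  · refine le_trans ?_ (le_fracCap G hr)
    exact Real.one_le_rpow (by exact_mod_cast one_le_indepNum _) (by positivity)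

/-- Lower bound via `n - 1`: if `0 < γ < (n-1)/n` then
`Θ_γ(G) ≥ n / (2^{H(γ)} (n-1)^γ)`, and if `(n-1)/n ≤ γ ≤ 1` then `Θ_γ(G) ≥ 1`. -/
theorem fracCap_lower_bound_n {V : Type*} [Fintype V] [DecidableEq V]
    (G : SimpleGraph V) (hconn : G.Connected) (hn : 3 ≤ Fintype.card V)
    (γ : ℝ) (hγ0 : 0 < γ) (hγ1 : γ ≤ 1) :
    (γ < ((Fintype.card V : ℝ) - 1) / (Fintype.card V : ℝ) →
      (Fintype.card V : ℝ) / ((2 : ℝ) ^ binH γ * ((Fintype.card V : ℝ) - 1) ^ γ)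
        ≤ fracCap γ G) ∧
    (((Fintype.card V : ℝ) - 1) / (Fintype.card V : ℝ) ≤ γ →
      1 ≤ fracCap γ G) :=
  fracCap_lower_bound_n_general G hn γ hγ0
end
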